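/- arXiv:2403.02492 — 3 statements merged into one kernel-verified Lean document; each statement's English description precedes it below -/
import Mathlib

section
/- If S ⊆ ℕ is Σ⁰₂ and S = [S], then there is a Π⁰₁ set T ⊆ ℕ with [T] = S. (This is the unrelativized instance of the paper's lemma, which is stated for an arbitrary oracle X.) -/
/-! Write `S = {e | ∃ k, ∀ y, R e k y}`. The existential witness `k` can be absorbed into the
index: `padIndex e k` is an index of the program `e` precomposed with `k` dummy identities, so it
names the same c.e. set, hence the same ceer, and `(e, k)` is computably recoverable from it.
Thus `T = {padIndex e k | ∀ y, R e k y}` is Π⁰₁, and `[T] = [S] = S`. -/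

/-- The `e`-th computably enumerable subset of `ℕ`: the domain of the `e`-th partial
computable function. -/
def W (e : ℕ) : Set ℕ := {n | ((Denumerable.ofNat Nat.Partrec.Code e).eval n).Dom}

/-- A set `S ⊆ ℕ` is Σ⁰₃ if there is a computable predicate `R ⊆ ℕ⁴` with
`n ∈ S ↔ ∃x ∀y ∃z, R n x y z`. -/
def IsSigma03 (S : Set ℕ) : Prop :=
  ∃ R : ℕ → ℕ → ℕ → ℕ → Bool,
    (Computable fun p : ℕ × ℕ × ℕ × ℕ => R p.1 p.2.1 p.2.2.1 p.2.2.2) ∧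
    ∀ n, n ∈ S ↔ ∃ x, ∀ y, ∃ z, R n x y z = true

/-- A binary relation on `ℕ` is Σ⁰₃ if the corresponding set of codes of pairs
(under the standard computable pairing) is Σ⁰₃. -/
def Sigma03Rel (E : ℕ → ℕ → Prop) : Prop :=
  IsSigma03 {p : ℕ | E p.unpair.1 p.unpair.2}

/-- `E` computably reduces to `F`: there is a total computable `Φ` with
`m E n ↔ Φ(m) F Φ(n)`. -/
def ComputableReduction (E F : ℕ → ℕ → Prop) : Prop :=
  ∃ Φ : ℕ → ℕ, Computable Φ ∧ ∀ m n, E m n ↔ F (Φ m) (Φ n)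

/-- A set `S ⊆ ℕ` is Σ⁰₂ if there is a computable predicate `R ⊆ ℕ³` with
`n ∈ S ↔ ∃x ∀y, R n x y`. -/
def IsSigma02 (S : Set ℕ) : Prop :=
  ∃ R : ℕ → ℕ → ℕ → Bool,
    (Computable fun p : ℕ × ℕ × ℕ => R p.1 p.2.1 p.2.2) ∧
    ∀ n, n ∈ S ↔ ∃ x, ∀ y, R n x y = true

/-- A set `T ⊆ ℕ` is Π⁰₁ if there is a computable predicate `R ⊆ ℕ²` with
`n ∈ T ↔ ∀x, R n x`. -/
def IsPi01 (T : Set ℕ) : Prop :=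
  ∃ R : ℕ → ℕ → Bool,
    (Computable fun p : ℕ × ℕ => R p.1 p.2) ∧
    ∀ n, n ∈ T ↔ ∀ x, R n x = true

/-- `E` and `F` are computably equivalent: computable reductions exist in both directions. -/
def CeerEquiv (E F : ℕ → ℕ → Prop) : Prop :=
  ComputableReduction E F ∧ ComputableReduction F E

/-- The fixed uniform enumeration of all ceers: `ceer i` is the equivalence relation
generated by the `i`-th c.e. set `W i` of coded pairs. -/
def ceer (i : ℕ) : ℕ → ℕ → Prop :=
  Relation.EqvGen fun m n => Nat.pair m n ∈ W i

/-- `[S]`: the closure of a set of indices of ceers under computable equivalence. -/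
def ceerClosure (S : Set ℕ) : Set ℕ := {i | ∃ j ∈ S, CeerEquiv (ceer i) (ceer j)}

/-- An equivalence relation on `ℕ` has infinitely many classes iff there is an infinite
family of pairwise inequivalent elements. -/
def HasInfinitelyManyClasses (E : ℕ → ℕ → Prop) : Prop :=
  ∃ f : ℕ → ℕ, ∀ m n, m ≠ n → ¬E (f m) (f n)

/-- `S` is proper on the infinite ceers: some ceer with infinitely many classes has its
index in `[S]` and some ceer with infinitely many classes has its index outside `[S]`. -/
def ProperOnInfiniteCeers (S : Set ℕ) : Prop :=
  ∃ i j, HasInfinitelyManyClasses (ceer i) ∧ HasInfinitelyManyClasses (ceer j) ∧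
    i ∈ ceerClosure S ∧ j ∉ ceerClosure S

open Nat.Partrec (Code)
open Nat.Partrec.Code Encodable

def padCode (k : ℕ) : Code := (Code.comp Code.id)^[k] Code.id

lemma padCode_succ (k : ℕ) : padCode (k + 1) = Code.comp Code.id (padCode k) :=
  Function.iterate_succ_apply' _ _ _

lemma eval_padCode (k n : ℕ) : (padCode k).eval n = Part.some n := by
  induction k with
  | zero => exact eval_id n
  | succ k ih =>
    simp only [padCode_succ, eval, ih]
    exact (Part.bind_some _ _).trans (eval_id n)

lemma primrec_padCode : Primrec padCode :=
  Primrec.nat_iterate .id (.const Code.id) (primrec₂_comp.comp (.const Code.id) .snd).to₂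

lemma strictMono_encode_padCode : StrictMono fun k => encode (padCode k) :=
  strictMono_nat_of_lt_succ fun k => by
    simpa only [padCode_succ] using (encode_lt_comp Code.id (padCode k)).2

def padIndex (e k : ℕ) : ℕ := encode (Code.comp (Denumerable.ofNat Code e) (padCode k))

lemma padIndex_eq (e k : ℕ) : padIndex e k = 4 * Nat.pair e (encode (padCode k)) + 6 := by
  simp only [padIndex, encodeCode_eq, encodeCode]
  rw [← encodeCode_eq, Denumerable.encode_ofNat]
  ring

lemma computable₂_padIndex : Computable₂ padIndex :=
  (Primrec.encode.comp (primrec₂_comp.comp ((Primrec.ofNat Code).comp .fst)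
    (primrec_padCode.comp .snd))).to_comp

lemma W_padIndex (e k : ℕ) : W (padIndex e k) = W e := by
  ext n
  simp only [W, padIndex, Denumerable.ofNat_encode, eval, eval_padCode]
  exact Iff.of_eq (congrArg Part.Dom (Part.bind_some _ _))

lemma ceer_padIndex (e k : ℕ) : ceer (padIndex e k) = ceer e := by
  simp only [ceer, W_padIndex]

/-- Inverts `padIndex` through `padIndex_eq`; `k` is found by a bounded search since
`k ≤ encode (padCode k)`. -/
def unpadIndex (m : ℕ) : ℕ × ℕ :=
  let p := ((m - 6) / 4).unpair
  (p.1, Nat.findGreatest (fun k => encode (padCode k) = p.2) p.2)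

lemma unpadIndex_padIndex (e k : ℕ) : unpadIndex (padIndex e k) = (e, k) := by
  have hk : k ≤ encode (padCode k) := strictMono_encode_padCode.le_apply
  simp only [unpadIndex, padIndex_eq, Nat.add_sub_cancel, Nat.mul_div_cancel_left _ four_pos,
    Nat.unpair_pair, Prod.mk.injEq, true_and]
  exact strictMono_encode_padCode.injective
    (Nat.findGreatest_spec (P := fun j => encode (padCode j) = encode (padCode k)) hk rfl)

lemma computable_unpadIndex : Computable unpadIndex := by
  have hp : Primrec fun m : ℕ => ((m - 6) / 4).unpair :=
    Primrec.unpair.comp (Primrec.nat_div.comp (Primrec.nat_sub.comp .id (.const 6)) (.const 4))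
  have hsearch : PrimrecRel fun m k => encode (padCode k) = ((m - 6) / 4).unpair.2 :=
    Primrec.eq.comp (Primrec.encode.comp (primrec_padCode.comp .snd))
      (Primrec.snd.comp (hp.comp .fst))
  exact (Primrec.pair (Primrec.fst.comp hp)
    (Primrec.nat_findGreatest (Primrec.snd.comp hp) hsearch)).to_comp

lemma isPi01_image_of_leftInverse {f : ℕ → ℕ → ℕ} {g : ℕ → ℕ × ℕ} (hf : Computable₂ f)
    (hg : Computable g) (hgf : ∀ e k, g (f e k) = (e, k)) {R : ℕ → ℕ → ℕ → Bool}
    (hR : Computable fun p : ℕ × ℕ × ℕ => R p.1 p.2.1 p.2.2) :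
    IsPi01 {m | ∃ e k, m = f e k ∧ ∀ y, R e k y = true} := by
  -- `g m` is the only candidate for `(e, k)`, so the leading `∃` is a computable test.
  refine ⟨fun m y => decide (m = f (g m).1 (g m).2) && R (g m).1 (g m).2 y, ?_, fun m => ?_⟩
  · have hg₁ : Computable fun p : ℕ × ℕ => (g p.1).1 := Computable.fst.comp (hg.comp .fst)
    have hg₂ : Computable fun p : ℕ × ℕ => (g p.1).2 := Computable.snd.comp (hg.comp .fst)
    exact Primrec.and.to_comp.comp
      (Primrec.eq.decide.to_comp.comp .fst (hf.comp hg₁ hg₂))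
      (hR.comp (hg₁.pair (hg₂.pair .snd)))
  · constructor
    · rintro ⟨e, k, rfl, h⟩ y
      simp [hgf, h y]
    · intro h
      refine ⟨_, _, of_decide_eq_true (Bool.and_eq_true _ _ ▸ h 0).1, fun y => ?_⟩
      exact (Bool.and_eq_true _ _ ▸ h y).2

lemma ceerClosure_padIndex_image (P : ℕ → ℕ → Prop) :
    ceerClosure {m | ∃ e k, m = padIndex e k ∧ P e k} = ceerClosure {e | ∃ k, P e k} := by
  ext i
  constructor
  · rintro ⟨_, ⟨e, k, rfl, h⟩, hi⟩
    exact ⟨e, ⟨k, h⟩, ceer_padIndex e k ▸ hi⟩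
  · rintro ⟨e, ⟨k, h⟩, hi⟩
    exact ⟨padIndex e k, ⟨e, k, rfl, h⟩, (ceer_padIndex e k).symm ▸ hi⟩

/-- If `S` is Σ⁰₂ and `S = [S]`, then there is a Π⁰₁ set `T` with `[T] = S`. -/
theorem exists_Pi01_generating_set (S : Set ℕ) (hS : IsSigma02 S) (hcl : S = ceerClosure S) :
    ∃ T : Set ℕ, IsPi01 T ∧ ceerClosure T = S := by
  obtain ⟨R, hR, hSR⟩ := hS
  refine ⟨{m | ∃ e k, m = padIndex e k ∧ ∀ y, R e k y = true},
    isPi01_image_of_leftInverse computable₂_padIndex computable_unpadIndex unpadIndex_padIndex hR,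
    ?_⟩
  have hS_eq : {e | ∃ k, ∀ y, R e k y = true} = S := (Set.ext hSR).symm
  rw [ceerClosure_padIndex_image, hS_eq, ← hcl]
end

section
/- There exists a ceer E that is not computable (i.e., the set {⟨m,n⟩ : m E n} is not computable) but each of whose equivalence classes {n : n E m} is a computable subset of ℕ. -/
open Nat.Partrec (Code)

def MergePairs (A : ℕ → Prop) (m n : ℕ) : Prop :=
  m = n ∨ (m / 2 = n / 2 ∧ A (m / 2))

theorem MergePairs.equivalence (A : ℕ → Prop) : Equivalence (MergePairs A) where
  refl _ := Or.inl rfl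
  symm
    | Or.inl h => Or.inl h.symm
    | Or.inr ⟨h, hA⟩ => Or.inr ⟨h.symm, h ▸ hA⟩
  trans
    | Or.inl h, hyz => h ▸ hyz
    | hxy, Or.inl h => h ▸ hxy
    | Or.inr ⟨h, hA⟩, Or.inr ⟨h', _⟩ => Or.inr ⟨h.trans h', hA⟩

theorem mergePairs_even_odd_iff (A : ℕ → Prop) (k : ℕ) :
    MergePairs A (2 * k) (2 * k + 1) ↔ A k := by
  simp only [MergePairs]
  constructor
  · rintro (h | ⟨-, hA⟩)
    · omega
    · simpa using hA
  · intro hA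
    exact Or.inr ⟨by omega, by simpa using hA⟩

theorem Part.dom_assert_some {p : Prop} {α : Type*} (a : α) :
    (Part.assert p fun _ => Part.some a).Dom ↔ p :=
  ⟨fun ⟨h, _⟩ => h, fun h => ⟨h, trivial⟩⟩

theorem REPred.mergePairs {A : ℕ → Prop} (hA : REPred A) :
    REPred fun p : ℕ => MergePairs A p.unpair.1 p.unpair.2 := by
  have hf : Partrec fun p : ℕ =>
      cond (decide (p.unpair.1 = p.unpair.2)) (Part.some ())
        (cond (decide (p.unpair.1 / 2 = p.unpair.2 / 2))
          (Part.assert (A (p.unpair.1 / 2)) fun _ => Part.some ()) Part.none) := by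
    have h₁ : Primrec fun p : ℕ => p.unpair.1 := Primrec.fst.comp Primrec.unpair
    have h₂ : Primrec fun p : ℕ => p.unpair.2 := Primrec.snd.comp Primrec.unpair
    have half : ∀ {g : ℕ → ℕ}, Primrec g → Primrec fun p => g p / 2 :=
      fun hg => Primrec.nat_div.comp hg (Primrec.const 2)
    exact Partrec.cond (Primrec.eq.comp h₁ h₂).decide.to_comp (Partrec.const' _)
      (Partrec.cond (Primrec.eq.comp (half h₁) (half h₂)).decide.to_comp
        (hA.comp (half h₁).to_comp) Partrec.none)
  refine hf.dom_re.of_eq fun p => ?_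
  unfold MergePairs
  by_cases h₁ : p.unpair.1 = p.unpair.2
  · simp [h₁]
  · by_cases h₂ : p.unpair.1 / 2 = p.unpair.2 / 2 <;> simp [h₁, h₂, Part.dom_assert_some]

theorem ComputablePred.of_mergePairs {A : ℕ → Prop}
    (h : ComputablePred fun p : ℕ => MergePairs A p.unpair.1 p.unpair.2) : ComputablePred A := by
  refine computable_of_manyOneReducible ?_ h
  refine ⟨fun k => Nat.pair (2 * k) (2 * k + 1), ?_, fun k => ?_⟩
  · exact (Primrec₂.natPair.comp (Primrec.nat_mul.comp (Primrec.const 2) Primrec.id)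
      (Primrec.succ.comp (Primrec.nat_mul.comp (Primrec.const 2) Primrec.id))).to_comp
  · simp only [Nat.unpair_pair, mergePairs_even_odd_iff]

theorem MergePairs.computablePred_left (A : ℕ → Prop) (m : ℕ) :
    ComputablePred fun n => MergePairs A n m := by
  by_cases hA : A (m / 2)
  · refine (Primrec.eq.comp (Primrec.nat_div.comp Primrec.id (Primrec.const 2))
      (Primrec.const (m / 2))).computablePred.of_eq fun n => ?_
    exact ⟨fun h => Or.inr ⟨h, h ▸ hA⟩, by rintro (rfl | ⟨h, -⟩) <;> trivial⟩
  · refine (Primrec.eq.comp Primrec.id (Primrec.const m)).computablePred.of_eq fun n => ?_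
    exact ⟨Or.inl, by rintro (h | ⟨h, hA'⟩) <;> [exact h; exact absurd (h ▸ hA') hA]⟩

theorem REPred.exists_W {p : ℕ → Prop} (hp : REPred p) : ∃ e, ∀ n, p n ↔ n ∈ W e := by
  obtain ⟨c, hc⟩ := Nat.Partrec.Code.exists_code.1
    (Partrec.nat_iff.1 (hp.map (Computable.const 0).to₂))
  exact ⟨Encodable.encode c, fun n => by
    simp only [W, Denumerable.ofNat_encode, hc, Part.map_Dom]
    exact (Part.dom_assert_some 0).symm⟩

theorem exists_rePred_not_computablePred :
    ∃ A : ℕ → Prop, REPred A ∧ ¬ComputablePred A := by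
  refine ⟨fun n => ((Denumerable.ofNat Code n).eval 0).Dom,
    (Nat.Partrec.Code.eval_part.comp (Computable.ofNat Code) (Computable.const 0)).dom_re,
    fun h => ComputablePred.halting_problem 0 ?_⟩
  exact ComputablePred.computable_of_manyOneReducible
    (ManyOneReducible.mk _ (Computable.encode (α := Code))) h |>.of_eq fun c => by simp

/-- There is a ceer `E` (an equivalence relation on `ℕ` whose set of coded pairs is c.e.)
which is not computable but each of whose equivalence classes is computable. -/
theorem exists_noncomputable_ceer_with_computable_classes :
    ∃ E : ℕ → ℕ → Prop, Equivalence E ∧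
      (∃ e, ∀ m n, E m n ↔ Nat.pair m n ∈ W e) ∧
      ¬ComputablePred (fun p : ℕ => E p.unpair.1 p.unpair.2) ∧
      ∀ m, ComputablePred fun n => E n m := by
  obtain ⟨A, hA_re, hA_not_computable⟩ := exists_rePred_not_computablePred
  obtain ⟨e, he⟩ := hA_re.mergePairs.exists_W
  refine ⟨MergePairs A, MergePairs.equivalence A, ⟨e, fun m n => ?_⟩,
    fun h => hA_not_computable h.of_mergePairs, MergePairs.computablePred_left A⟩
  simpa using he (Nat.pair m n)
end

section
/- There exists a ceer E with infinitely many equivalence classes such that no ceer computably equivalent to E is the word problem of a recursively presented group. -/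
/-- Code of an element of the free group on a set `X ⊆ ℕ` of generators, via its reduced
word (with each generator coded by its value in `ℕ`). -/
def encodeFGX {X : Set ℕ} (g : FreeGroup X) : ℕ :=
  Encodable.encode (g.toWord.map fun p => ((p.1 : ℕ), p.2))

/-- The relator set over generators `X ⊆ ℕ` given by the `e`-th c.e. set: elements of the
free group on `X` whose codes lie in `W e`. -/
def relSetX (X : Set ℕ) (e : ℕ) : Set (FreeGroup X) := {g | encodeFGX g ∈ W e}

/-- Decode a natural number as an element of the free group on generators `X ⊆ ℕ`. -/
noncomputable def decodeWordX (X : Set ℕ) (m : ℕ) : FreeGroup X :=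
  FreeGroup.mk
    (((Encodable.decode (α := List (ℕ × Bool)) m).getD []).filterMap fun p =>
      @dite _ (p.1 ∈ X) (Classical.dec _) (fun h => some ((⟨p.1, h⟩ : X), p.2)) fun _ => none)

/-- The word problem of the recursively presented group `⟨X ∣ relSetX X e⟩`: the
equivalence relation on `ℕ` identifying codes of words whose images in the group coincide. -/
def wordProblemX (X : Set ℕ) (e : ℕ) : ℕ → ℕ → Prop := fun m n =>
  PresentedGroup.mk (relSetX X e) (decodeWordX X m) =
    PresentedGroup.mk (relSetX X e) (decodeWordX X n)

/-!
Collapse the halting set `K` to a single point; every other class of the resulting ceer is a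
singleton. Suppose it were computably equivalent to a word problem, via `Φ` and `Ψ`. Since the
ceer has two classes, `Ψ` sends some word `a` outside `K`, and then `x` is equal to `a` in the
group iff `Ψ x = Ψ a`. Every class of a word problem is carried onto the class of `a` by a
computable translation, so every class is decidable; pulling back the class of `Φ s` for
`s ∈ K` along `Φ` decides `K`. The same works for any noncomputable c.e. set.
-/

open Nat.Partrec (Code)

theorem REPred.exists_W_iff {p : ℕ → Prop} (hp : REPred p) : ∃ e, ∀ n, n ∈ W e ↔ p n := by
  obtain ⟨c, hc⟩ := Code.exists_code.1 (Partrec.nat_iff.1 (hp.map (Computable.const 0).to₂))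
  refine ⟨Encodable.encode c, fun n => ?_⟩
  simp only [W, Set.mem_ofPred_eq, Denumerable.ofNat_encode, hc, Part.map_Dom]
  exact ⟨fun ⟨h, _⟩ => h, fun h => ⟨h, trivial⟩⟩

theorem REPred.comp {α β : Type*} [Primcodable α] [Primcodable β] {p : β → Prop} {f : α → β}
    (hp : REPred p) (hf : Computable f) : REPred fun a => p (f a) :=
  Partrec.comp hp hf

theorem REPred.or {α : Type*} [Primcodable α] {p q : α → Prop} (hp : REPred p) (hq : REPred q) :
    REPred fun a => p a ∨ q a := by
  obtain ⟨k, hk, hdom⟩ := Partrec.merge' hp hq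
  exact hk.dom_re.of_eq fun a => (hdom a).2.trans (by simp [Part.assert])

theorem REPred.and {α : Type*} [Primcodable α] {p q : α → Prop} (hp : REPred p) (hq : REPred q) :
    REPred fun a => p a ∧ q a :=
  (hp.bind (hq.comp Computable.fst).to₂).dom_re.of_eq fun a => by simp [Part.assert]

theorem ComputablePred.of_finite {s : Set ℕ} (hs : s.Finite) : ComputablePred (· ∈ s) := by
  obtain ⟨t, rfl⟩ := hs.exists_finset_coe
  have hlist : PrimrecPred fun m => ∃ a ∈ t.toList, a = m :=
    (PrimrecRel.exists_mem_list Primrec.eq).comp (Primrec.const t.toList) Primrec.id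
  exact hlist.computablePred.of_eq fun m => by simp

theorem Set.infinite_compl_of_not_computablePred {S : Set ℕ} (hS : ¬ComputablePred (· ∈ S)) :
    Sᶜ.Infinite := fun hfin => hS ((ComputablePred.of_finite hfin).not.of_eq fun _ => not_not)

theorem Set.exists_mem_and_exists_not_mem_of_not_computablePred {S : Set ℕ}
    (hS : ¬ComputablePred (· ∈ S)) : (∃ s, s ∈ S) ∧ ∃ t, t ∉ S := by
  refine ⟨?_, (Set.infinite_compl_of_not_computablePred hS).nonempty⟩
  by_contra! hempty
  exact hS ((ComputablePred.of_finite Set.finite_empty).of_eq fun m => by simp [hempty m])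

def collapseRel (S : Set ℕ) (m n : ℕ) : Prop := m = n ∨ (m ∈ S ∧ n ∈ S)

theorem collapseRel_equivalence (S : Set ℕ) : Equivalence (collapseRel S) where
  refl _ := Or.inl rfl
  symm
    | .inl h => .inl h.symm
    | .inr ⟨hm, hn⟩ => .inr ⟨hn, hm⟩
  trans
    | .inl rfl, h => h
    | .inr h, .inl rfl => .inr h
    | .inr ⟨hm, _⟩, .inr ⟨_, hk⟩ => .inr ⟨hm, hk⟩

theorem collapseRel_iff_eq {S : Set ℕ} {m n : ℕ} (hn : n ∉ S) : collapseRel S m n ↔ m = n :=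
  or_iff_left fun h => hn h.2

theorem collapseRel_iff_mem {S : Set ℕ} {m n : ℕ} (hn : n ∈ S) : collapseRel S m n ↔ m ∈ S :=
  ⟨fun h => h.elim (· ▸ hn) And.left, fun hm => .inr ⟨hm, hn⟩⟩

theorem hasInfinitelyManyClasses_collapseRel {S : Set ℕ} (hS : Sᶜ.Infinite) :
    HasInfinitelyManyClasses (collapseRel S) := by
  let f := hS.natEmbedding
  refine ⟨fun n => f n, fun m n hmn h => ?_⟩
  rw [collapseRel_iff_eq (f n).2] at h
  exact hmn (f.injective (Subtype.ext h))

theorem REPred.exists_W_iff_collapseRel {S : Set ℕ} (hS : REPred (· ∈ S)) :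
    ∃ e, ∀ m n, collapseRel S m n ↔ Nat.pair m n ∈ W e := by
  have hfst : Computable fun p : ℕ => p.unpair.1 := (Primrec.fst.comp Primrec.unpair).to_comp
  have hsnd : Computable fun p : ℕ => p.unpair.2 := (Primrec.snd.comp Primrec.unpair).to_comp
  have hdiag : REPred fun p : ℕ => p.unpair.1 = p.unpair.2 :=
    (Primrec.eq.comp Primrec.fst Primrec.snd).computablePred.to_re.comp (hfst.pair hsnd)
  obtain ⟨e, he⟩ := (hdiag.or ((hS.comp hfst).and (hS.comp hsnd))).exists_W_iff
  exact ⟨e, fun m n => by rw [he, Nat.unpair_pair]; rfl⟩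

def haltingSet : Set ℕ := {c | ((Denumerable.ofNat Code c).eval 0).Dom}

theorem haltingSet_re : REPred (· ∈ haltingSet) :=
  (ComputablePred.halting_problem_re 0).comp (Primrec.ofNat Code).to_comp

theorem not_computablePred_haltingSet : ¬ComputablePred (· ∈ haltingSet) := fun h =>
  ComputablePred.halting_problem 0 <| ComputablePred.computable_of_manyOneReducible
    ⟨Encodable.encode, Computable.encode, fun c => by simp [haltingSet]⟩ h

def decodeWord (m : ℕ) : List (ℕ × Bool) := (Encodable.decode m).getD []

noncomputable def restrictLetter (X : Set ℕ) (p : ℕ × Bool) : Option (X × Bool) :=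
  @dite _ (p.1 ∈ X) (Classical.dec _) (fun h => some ((⟨p.1, h⟩ : X), p.2)) fun _ => none

theorem decodeWordX_eq (X : Set ℕ) (m : ℕ) :
    decodeWordX X m = FreeGroup.mk ((decodeWord m).filterMap (restrictLetter X)) := rfl

theorem decodeWord_encode (l : List (ℕ × Bool)) : decodeWord (Encodable.encode l) = l := by
  simp [decodeWord]

theorem restrictLetter_flip (X : Set ℕ) (p : ℕ × Bool) :
    restrictLetter X (p.1, !p.2) = (restrictLetter X p).map fun g => (g.1, !g.2) := by
  by_cases h : p.1 ∈ X <;> simp [restrictLetter, h]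

def wordCodeMul (a b : ℕ) : ℕ := Encodable.encode (decodeWord a ++ decodeWord b)

def wordCodeInv (a : ℕ) : ℕ := Encodable.encode (FreeGroup.invRev (decodeWord a))

theorem decodeWordX_wordCodeMul (X : Set ℕ) (a b : ℕ) :
    decodeWordX X (wordCodeMul a b) = decodeWordX X a * decodeWordX X b := by
  simp only [decodeWordX_eq, wordCodeMul, decodeWord_encode, List.filterMap_append,
    FreeGroup.mul_mk]

theorem decodeWordX_wordCodeInv (X : Set ℕ) (a : ℕ) :
    decodeWordX X (wordCodeInv a) = (decodeWordX X a)⁻¹ := by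
  simp only [decodeWordX_eq, wordCodeInv, decodeWord_encode, FreeGroup.inv_mk,
    FreeGroup.invRev, List.filterMap_reverse, List.filterMap_map, List.map_filterMap,
    Function.comp_def, restrictLetter_flip]

theorem wordCodeMul_primrec : Primrec₂ wordCodeMul :=
  have hdec : Primrec decodeWord := Primrec.option_getD.comp Primrec.decode (Primrec.const [])
  Primrec.encode.comp₂ (Primrec.list_append.comp₂ (hdec.comp₂ Primrec₂.left)
    (hdec.comp₂ Primrec₂.right))

/-- Right translation by `y⁻¹ a` moves the class of `y` onto the class of `a`. -/
theorem wordProblemX_iff_wordCodeMul (X : Set ℕ) (e x y a : ℕ) :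
    wordProblemX X e x y ↔ wordProblemX X e (wordCodeMul (wordCodeMul x (wordCodeInv y)) a) a := by
  simp only [wordProblemX, decodeWordX_wordCodeMul, decodeWordX_wordCodeInv, map_mul, map_inv,
    mul_eq_right, mul_inv_eq_one]

/-- The class of `a` is sent by `Ψ` to a singleton class of `collapseRel S`, so after translating
the class of `y` onto it, membership becomes literal equality of `Ψ`-values. -/
theorem computablePred_wordProblemX_of_reduction {X : Set ℕ} {e : ℕ} {S : Set ℕ} {Ψ : ℕ → ℕ}
    (hΨc : Computable Ψ) (hΨ : ∀ m n, wordProblemX X e m n ↔ collapseRel S (Ψ m) (Ψ n))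
    {a : ℕ} (ha : Ψ a ∉ S) (y : ℕ) : ComputablePred fun x => wordProblemX X e x y := by
  let t : ℕ → ℕ := fun x => wordCodeMul (wordCodeMul x (wordCodeInv y)) a
  have ht : Computable t := wordCodeMul_primrec.to_comp.comp
    (wordCodeMul_primrec.to_comp.comp Computable.id (Computable.const _)) (Computable.const _)
  refine (Primrec.eq.decide.to_comp.comp (hΨc.comp ht) (Computable.const (Ψ a))).computablePred
    |>.of_eq fun x => ?_
  rw [wordProblemX_iff_wordCodeMul X e x y a, hΨ, collapseRel_iff_eq ha]

theorem not_ceerEquiv_collapseRel_wordProblemX {S : Set ℕ} (hS : ¬ComputablePred (· ∈ S))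
    (X : Set ℕ) (e : ℕ) : ¬CeerEquiv (collapseRel S) (wordProblemX X e) := by
  rintro ⟨⟨Φ, hΦc, hΦ⟩, ⟨Ψ, hΨc, hΨ⟩⟩
  obtain ⟨⟨s, hs⟩, ⟨t, ht⟩⟩ := Set.exists_mem_and_exists_not_mem_of_not_computablePred hS
  obtain ⟨a, ha⟩ : ∃ a, Ψ a ∉ S := by
    by_contra! hall
    exact ht ((collapseRel_iff_mem hs).1 ((hΦ t s).2 ((hΨ _ _).2 (.inr ⟨hall _, hall _⟩))))
  exact hS <| ComputablePred.computable_of_manyOneReducible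
    ⟨Φ, hΦc, fun m => (collapseRel_iff_mem hs).symm.trans (hΦ m s)⟩
    (computablePred_wordProblemX_of_reduction hΨc hΨ ha (Φ s))

/-- There is a ceer `E` with infinitely many classes such that no ceer computably
equivalent to `E` is the word problem of a recursively presented group. -/
theorem exists_ceer_not_equivalent_to_any_wordProblem :
    ∃ E : ℕ → ℕ → Prop, Equivalence E ∧
      (∃ e, ∀ m n, E m n ↔ Nat.pair m n ∈ W e) ∧
      HasInfinitelyManyClasses E ∧
      ∀ X : Set ℕ, ComputablePred (· ∈ X) → ∀ e, ¬CeerEquiv E (wordProblemX X e) :=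
  ⟨collapseRel haltingSet, collapseRel_equivalence haltingSet,
    haltingSet_re.exists_W_iff_collapseRel,
    hasInfinitelyManyClasses_collapseRel
      (Set.infinite_compl_of_not_computablePred not_computablePred_haltingSet),
    fun X _ => not_ceerEquiv_collapseRel_wordProblemX not_computablePred_haltingSet X⟩
end
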